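/- arXiv:2007.11304 — 2 statements merged into one kernel-verified Lean document; each statement's English description precedes it below -/
import Mathlib

section
/- For (t, ε) = (1/√5, +1) the set of nonzero solutions (a₁,a₂,a₃) ∈ ℝ³ of the system (S) equals the 2-sphere {a ∈ ℝ³ : a₁² + a₂² + a₃² = 3/20}, and for (t, ε) = (1, −1) the set of nonzero solutions of (S) equals the circle {a ∈ ℝ³ : a₃ = 0 and a₁² + a₂² = 3/4}. -/
/-- The real system (S) characterizing deformed G₂-instantons of the form
A = i(a₁η₁ + a₂η₂ + a₃η₃) on the trivial line bundle with respect to φ_{t,ε}. -/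
def S (t ε : ℝ) (a : ℝ × ℝ × ℝ) : Prop :=
  (4 * (a.1 ^ 2 + a.2.1 ^ 2 + a.2.2 ^ 2) - (1 - 2 * ε * t ^ 2)) * a.1 = 0 ∧
  (4 * (a.1 ^ 2 + a.2.1 ^ 2 + a.2.2 ^ 2) - (1 - 2 * ε * t ^ 2)) * a.2.1 = 0 ∧
  (4 * (a.1 ^ 2 + a.2.1 ^ 2 + a.2.2 ^ 2) - (1 - 2 * t ^ 2)) * a.2.2 = 0

/-- For (t,ε) = (1/√5, +1) (the nearly parallel structure φ^{np}) the nonzero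
solutions of (S) form the 2-sphere of radius √(3/20); for (t,ε) = (1, −1)
(the nearly parallel structure φ^{ts}) they form the circle
{a₃ = 0, a₁² + a₂² = 3/4}. -/
theorem stmt_5 :
    {a : ℝ × ℝ × ℝ | a ≠ 0 ∧ S (1 / Real.sqrt 5) 1 a} =
      {a : ℝ × ℝ × ℝ | a.1 ^ 2 + a.2.1 ^ 2 + a.2.2 ^ 2 = 3 / 20} ∧
    {a : ℝ × ℝ × ℝ | a ≠ 0 ∧ S 1 (-1) a} =
      {a : ℝ × ℝ × ℝ | a.2.2 = 0 ∧ a.1 ^ 2 + a.2.1 ^ 2 = 3 / 4} := by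
  have h5 : (1 / Real.sqrt 5) ^ 2 = 1 / 5 := by
    rw [div_pow, one_pow, Real.sq_sqrt (by norm_num : (5:ℝ) ≥ 0)]
  constructor
  · ext ⟨x, y, z⟩
    simp only [Set.mem_setOf_eq, S, h5, Prod.mk.injEq]
    constructor
    · rintro ⟨hne, h1, h2, h3⟩
      by_contra hr
      have hx : x = 0 := by
        rcases mul_eq_zero.mp h1 with h | h
        · exact absurd (by linarith : x ^ 2 + y ^ 2 + z ^ 2 = 3 / 20) hr
        · exact h
      have hy : y = 0 := by
        rcases mul_eq_zero.mp h2 with h | h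
        · exact absurd (by linarith : x ^ 2 + y ^ 2 + z ^ 2 = 3 / 20) hr
        · exact h
      have hz : z = 0 := by
        rcases mul_eq_zero.mp h3 with h | h
        · exact absurd (by linarith : x ^ 2 + y ^ 2 + z ^ 2 = 3 / 20) hr
        · exact h
      exact hne (by simp [Prod.ext_iff, hx, hy, hz])
    · intro h
      refine ⟨fun hc => ?_, ?_, ?_, ?_⟩
      · simp only [Prod.ext_iff, Prod.fst_zero, Prod.snd_zero] at hc
        obtain ⟨hx, hy, hz⟩ := hc
        rw [hx, hy, hz] at h
        norm_num at h
      all_goals rw [h]; ring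
  · ext ⟨x, y, z⟩
    simp only [Set.mem_setOf_eq, S]
    constructor
    · rintro ⟨hne, h1, h2, h3⟩
      have hz : z = 0 := by
        rcases mul_eq_zero.mp h3 with h | h
        · nlinarith [sq_nonneg x, sq_nonneg y, sq_nonneg z]
        · exact h
      refine ⟨hz, ?_⟩
      subst hz
      by_contra hr
      have hx : x = 0 := by
        rcases mul_eq_zero.mp h1 with h | h
        · exact absurd (by linarith : x ^ 2 + y ^ 2 = 3 / 4) hr
        · exact h
      have hy : y = 0 := by
        rcases mul_eq_zero.mp h2 with h | h
        · exact absurd (by linarith : x ^ 2 + y ^ 2 = 3 / 4) hr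
        · exact h
      exact hne (by simp [Prod.ext_iff, hx, hy])
    · rintro ⟨hz, h⟩
      subst hz
      refine ⟨fun hc => ?_, ?_, ?_, by ring⟩
      · simp only [Prod.ext_iff, Prod.fst_zero, Prod.snd_zero] at hc
        obtain ⟨hx, hy, _⟩ := hc
        rw [hx, hy] at h
        norm_num at h
      all_goals
        have e : x ^ 2 + y ^ 2 + 0 ^ 2 = 3 / 4 := by linarith [h]
        rw [e]; ring
end

section
/- For (t, ε) = (1, +1) the only solution (a₁,a₂,a₃) ∈ ℝ³ of the system (S) is a₁ = a₂ = a₃ = 0, while for (t, ε) = (1/√5, −1) the set of nonzero solutions of (S) equals the circle {a ∈ ℝ³ : a₃ = 0 and a₁² + a₂² = 7/20} together with the two points (0, 0, ±√(3/20)). Hence the solution sets of (S) differ for the pairs (1,+1) versus (1,−1), and for (1/√5,+1) versus (1/√5,−1). -/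
lemma ht5 : (1 / Real.sqrt 5) ^ 2 = 1 / 5 := by
  rw [div_pow, one_pow, Real.sq_sqrt (by norm_num : (0:ℝ) ≤ 5)]

/-- For (t,ε) = (1, +1), the only solution of (S) is 0; for (t,ε) = (1/√5, −1),
the nonzero solutions of (S) form the circle {a₃ = 0, a₁² + a₂² = 7/20}
together with the two points (0, 0, ±√(3/20)).  Hence the solution sets of (S)
differ for the isometric pairs (1,+1) vs (1,−1) and (1/√5,+1) vs (1/√5,−1). -/
theorem stmt_6 :
    {a : ℝ × ℝ × ℝ | S 1 1 a} = {0} ∧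
    {a : ℝ × ℝ × ℝ | a ≠ 0 ∧ S (1 / Real.sqrt 5) (-1) a} =
      {a : ℝ × ℝ × ℝ | a.2.2 = 0 ∧ a.1 ^ 2 + a.2.1 ^ 2 = 7 / 20} ∪
        {(0, 0, Real.sqrt (3 / 20)), (0, 0, -Real.sqrt (3 / 20))} ∧
    {a : ℝ × ℝ × ℝ | S 1 1 a} ≠ {a : ℝ × ℝ × ℝ | S 1 (-1) a} ∧
    {a : ℝ × ℝ × ℝ | S (1 / Real.sqrt 5) 1 a} ≠
      {a : ℝ × ℝ × ℝ | S (1 / Real.sqrt 5) (-1) a} := by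
  refine ⟨?_, ?_, ?_, ?_⟩
  · ext a
    simp only [Set.mem_setOf_eq, Set.mem_singleton_iff, S]
    constructor
    · rintro ⟨h1, h2, h3⟩
      have hp : 4 * (a.1 ^ 2 + a.2.1 ^ 2 + a.2.2 ^ 2) - (1 - 2 * 1 * 1 ^ 2) ≠ 0 := by
        nlinarith [sq_nonneg a.1, sq_nonneg a.2.1, sq_nonneg a.2.2]
      have e1 : a.1 = 0 := by rcases mul_eq_zero.mp h1 with h | h; exact absurd h hp; exact h
      have e2 : a.2.1 = 0 := by rcases mul_eq_zero.mp h2 with h | h; exact absurd h hp; exact h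
      have e3 : a.2.2 = 0 := by
        rcases mul_eq_zero.mp h3 with h | h
        · nlinarith [sq_nonneg a.1, sq_nonneg a.2.1, sq_nonneg a.2.2]
        · exact h
      exact Prod.ext e1 (Prod.ext e2 e3)
    · rintro rfl; norm_num
  · have hsq : Real.sqrt (3 / 20) ^ 2 = 3 / 20 := Real.sq_sqrt (by norm_num)
    have hspos : (0:ℝ) < Real.sqrt (3 / 20) := Real.sqrt_pos.mpr (by norm_num)
    set s := Real.sqrt (3 / 20) with hs
    ext a
    simp only [Set.mem_setOf_eq, Set.mem_union, Set.mem_insert_iff,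
      Set.mem_singleton_iff, S, ht5]
    constructor
    · rintro ⟨hne, h1, h2, h3⟩
      by_cases hz : a.2.2 = 0
      · left
        refine ⟨hz, ?_⟩
        have hnz : a.1 ≠ 0 ∨ a.2.1 ≠ 0 := by
          by_contra h
          push_neg at h
          exact hne (Prod.ext h.1 (Prod.ext h.2 hz))
        rcases hnz with h | h
        · rcases mul_eq_zero.mp h1 with hc | hc
          · nlinarith
          · exact absurd hc h
        · rcases mul_eq_zero.mp h2 with hc | hc
          · nlinarith
          · exact absurd hc h
      · right
        have hr : 4 * (a.1 ^ 2 + a.2.1 ^ 2 + a.2.2 ^ 2) - (1 - 2 * (1 / 5)) = 0 := by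
          rcases mul_eq_zero.mp h3 with hc | hc
          · exact hc
          · exact absurd hc hz
        have e1 : a.1 = 0 := by
          rcases mul_eq_zero.mp h1 with hc | hc
          · exfalso; nlinarith
          · exact hc
        have e2 : a.2.1 = 0 := by
          rcases mul_eq_zero.mp h2 with hc | hc
          · exfalso; nlinarith
          · exact hc
        have e3 : a.2.2 ^ 2 = 3 / 20 := by nlinarith
        have h2' : a.2.2 ^ 2 = s ^ 2 := by rw [hsq, e3]
        rcases sq_eq_sq_iff_eq_or_eq_neg.mp h2' with h | h
        · left; rw [Prod.ext_iff, Prod.ext_iff]; exact ⟨e1, e2, h⟩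
        · right; rw [Prod.ext_iff, Prod.ext_iff]; exact ⟨e1, e2, h⟩
    · rintro (⟨hz, hc⟩ | h | h)
      · refine ⟨?_, ?_, ?_, ?_⟩
        · intro h0
          rw [h0] at hc
          norm_num at hc
        · rw [hz]; linear_combination (4 * a.1) * hc
        · rw [hz]; linear_combination (4 * a.2.1) * hc
        · rw [hz]; ring
      · subst h
        refine ⟨?_, ?_, ?_, ?_⟩
        · intro h0
          rw [Prod.ext_iff, Prod.ext_iff] at h0
          exact hspos.ne' h0.2.2
        · show (4 * ((0:ℝ) ^ 2 + 0 ^ 2 + s ^ 2) - (1 - 2 * (-1) * (1/5))) * 0 = 0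
          ring
        · show (4 * ((0:ℝ) ^ 2 + 0 ^ 2 + s ^ 2) - (1 - 2 * (-1) * (1/5))) * 0 = 0
          ring
        · show (4 * ((0:ℝ) ^ 2 + 0 ^ 2 + s ^ 2) - (1 - 2 * (1/5))) * s = 0
          linear_combination (4 * s) * hsq
      · subst h
        refine ⟨?_, ?_, ?_, ?_⟩
        · intro h0
          rw [Prod.ext_iff, Prod.ext_iff] at h0
          have h' : -s = (0:ℝ) := h0.2.2
          nlinarith [h']
        · show (4 * ((0:ℝ) ^ 2 + 0 ^ 2 + (-s) ^ 2) - (1 - 2 * (-1) * (1/5))) * 0 = 0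
          ring
        · show (4 * ((0:ℝ) ^ 2 + 0 ^ 2 + (-s) ^ 2) - (1 - 2 * (-1) * (1/5))) * 0 = 0
          ring
        · show (4 * ((0:ℝ) ^ 2 + 0 ^ 2 + (-s) ^ 2) - (1 - 2 * (1/5))) * (-s) = 0
          linear_combination (-4 * s) * hsq
  · intro h
    have h3 : Real.sqrt 3 ^ 2 = 3 := Real.sq_sqrt (by norm_num)
    have hpos : (0:ℝ) < Real.sqrt 3 := Real.sqrt_pos.mpr (by norm_num)
    set u := Real.sqrt 3 with hu
    have hmem : (⟨u / 2, 0, 0⟩ : ℝ × ℝ × ℝ) ∈ {a : ℝ × ℝ × ℝ | S 1 (-1) a} := by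
      refine ⟨?_, ?_, ?_⟩
      · show (4 * ((u / 2) ^ 2 + 0 ^ 2 + 0 ^ 2) - (1 - 2 * (-1) * 1 ^ 2)) * (u / 2) = 0
        linear_combination (u / 2) * h3
      · show (4 * ((u / 2) ^ 2 + 0 ^ 2 + 0 ^ 2) - (1 - 2 * (-1) * 1 ^ 2)) * 0 = 0
        ring
      · show (4 * ((u / 2) ^ 2 + 0 ^ 2 + 0 ^ 2) - (1 - 2 * 1 ^ 2)) * 0 = 0
        ring
    rw [← h] at hmem
    obtain ⟨h1, -, -⟩ := hmem
    have h1' : (4 * ((u / 2) ^ 2 + 0 ^ 2 + 0 ^ 2) - (1 - 2 * 1 * 1 ^ 2)) * (u / 2) = 0 := h1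
    nlinarith [h1']
  · intro h
    have hsq : Real.sqrt (7 / 20) ^ 2 = 7 / 20 := Real.sq_sqrt (by norm_num)
    have hpos : (0:ℝ) < Real.sqrt (7 / 20) := Real.sqrt_pos.mpr (by norm_num)
    set u := Real.sqrt (7 / 20) with hu
    have hmem : (⟨u, 0, 0⟩ : ℝ × ℝ × ℝ) ∈
        {a : ℝ × ℝ × ℝ | S (1 / Real.sqrt 5) (-1) a} := by
      refine ⟨?_, ?_, ?_⟩
      · show (4 * (u ^ 2 + 0 ^ 2 + 0 ^ 2) - (1 - 2 * (-1) * (1 / Real.sqrt 5) ^ 2)) * u = 0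
        rw [ht5]
        linear_combination (4 * u) * hsq
      · show (4 * (u ^ 2 + 0 ^ 2 + 0 ^ 2) - (1 - 2 * (-1) * (1 / Real.sqrt 5) ^ 2)) * 0 = 0
        ring
      · show (4 * (u ^ 2 + 0 ^ 2 + 0 ^ 2) - (1 - 2 * (1 / Real.sqrt 5) ^ 2)) * 0 = 0
        ring
    rw [← h] at hmem
    obtain ⟨h1, -, -⟩ := hmem
    have h1' : (4 * (u ^ 2 + 0 ^ 2 + 0 ^ 2) - (1 - 2 * 1 * (1 / Real.sqrt 5) ^ 2)) * u = 0 := h1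
    rw [ht5] at h1'
    nlinarith [h1']
end
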